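/- Fix n ≥ 2 and complex numbers q_{ij} (1 ≤ i, j ≤ n) with q_{ii} = 1, q_{ji} = q_{ij}^{-1} and |q_{ij}| = 1. Let x be a word of length m over {1, …, n} in which the letter i occurs exactly k_i times (so k_1 + … + k_n = m), and let P_m = (1/m!) Σ_{σ ∈ S_m} U^{m,q}_σ on ℓ²({1, …, n}^m), where U^{m,q}_σ e_y = q^σ(y) e_{y ∘ σ^{-1}}. Then ⟨P_m e_x, e_x⟩ = (k_1! k_2! ⋯ k_n!)/m!; equivalently, ‖P_m e_x‖² = (k_1! ⋯ k_n!)/m!. -/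

import Mathlib

open scoped BigOperators

/-- `q^σ(x) = ∏ q_{x_{σ⁻¹(k)} x_{σ⁻¹(i)}}`, the product over all pairs `i < k`
with `σ⁻¹(i) > σ⁻¹(k)`. -/
noncomputable def qSigma {n : ℕ} (q : Fin n → Fin n → ℂ) {m : ℕ} (x : Fin m → Fin n)
    (σ : Equiv.Perm (Fin m)) : ℂ :=
  ∏ p ∈ Finset.univ.filter (fun p : Fin m × Fin m => p.1 < p.2 ∧ σ⁻¹ p.2 < σ⁻¹ p.1),
    q (x (σ⁻¹ p.2)) (x (σ⁻¹ p.1))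

/-- The operator `U^{m,q}_σ` on `ℓ²({1,…,n}^m)` with `U^{m,q}_σ e_x = q^σ(x) e_{x ∘ σ⁻¹}`. -/
noncomputable def Uop {n : ℕ} (q : Fin n → Fin n → ℂ) (m : ℕ) (σ : Equiv.Perm (Fin m)) :
    EuclideanSpace ℂ (Fin m → Fin n) →L[ℂ] EuclideanSpace ℂ (Fin m → Fin n) :=
  LinearMap.toContinuousLinearMap
    { toFun := fun f => WithLp.toLp 2 (fun y => qSigma q (fun i => y (σ i)) σ * f (fun i => y (σ i)))
      map_add' := by
        intro f g
        ext y
        simp [PiLp.add_apply, mul_add]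
      map_smul' := by
        intro c f
        ext y
        simp [PiLp.smul_apply, smul_eq_mul] <;> ring }

/-- The `q`-symmetrization operator `P_m = (1/m!) Σ_σ U^{m,q}_σ`. -/
noncomputable def Pm {n : ℕ} (q : Fin n → Fin n → ℂ) (m : ℕ) :
    EuclideanSpace ℂ (Fin m → Fin n) →L[ℂ] EuclideanSpace ℂ (Fin m → Fin n) :=
  ((m.factorial : ℂ))⁻¹ • ∑ σ : Equiv.Perm (Fin m), Uop q m σ

/-!
The weights `q^σ` form a multiplicative coboundary: for `r a b = q a b` when `a < b` and
`r a b = 1` otherwise, and `W y = ∏_{i<j} r (y i) (y j)`, one has `q^σ(x) · W (x ∘ σ⁻¹) = W x`,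
because `q a b · r b a = r a b`. Hence `(P_m e_x)(y) = c_y W(x) / (m! W(y))` with `|W| = 1`,
where `c_y` counts the `σ` with `y ∘ σ = x`. Now `c_x = k_1! ⋯ k_n!` is the order of the
stabilizer of `x`, every nonzero `c_y` equals `c_x`, and `∑ c_y = m!`; so
`⟨P_m e_x, e_x⟩ = c_x / m!` and `‖P_m e_x‖² = ∑ c_y² / m!² = c_x / m!`.
-/

open Finset Equiv

namespace QSymmetrization

variable {n m : ℕ}

section Transporter

def transporter (x y : Fin m → Fin n) : Finset (Perm (Fin m)) :=
  univ.filter fun σ => y ∘ σ = x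

@[simp]
lemma mem_transporter {x y : Fin m → Fin n} {σ : Perm (Fin m)} :
    σ ∈ transporter x y ↔ y ∘ σ = x := by
  simp [transporter]

lemma card_transporter_self (x : Fin m → Fin n) :
    #(transporter x x) = ∏ i, (#{p | x p = i}).factorial := by
  rw [transporter, ← Fintype.card_subtype, DomMulAct.stabilizer_card]
  simp only [Fintype.card_subtype]

lemma card_transporter_of_mem {x y : Fin m → Fin n} {τ : Perm (Fin m)}
    (hτ : τ ∈ transporter x y) : #(transporter x y) = #(transporter x x) := by
  rw [mem_transporter] at hτ
  subst hτ
  refine card_nbij' (τ⁻¹ * ·) (τ * ·) ?_ ?_ (fun σ _ => by simp) (fun σ _ => by simp)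
  · intro σ hσ
    simp only [mem_coe, mem_transporter] at hσ ⊢
    funext i
    simpa only [Function.comp_apply, Perm.coe_mul, Perm.coe_inv, apply_symm_apply] using
      congrFun hσ i
  · intro σ hσ
    simp only [mem_coe, mem_transporter] at hσ ⊢
    rw [Perm.coe_mul, ← Function.comp_assoc, hσ]

lemma sum_card_transporter (x : Fin m → Fin n) :
    ∑ y, #(transporter x y) = m.factorial := by
  have hunique (σ : Perm (Fin m)) : ∑ y : Fin m → Fin n, (if y ∘ σ = x then 1 else 0) = 1 := by
    simp_rw [← Equiv.eq_comp_symm]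
    simp
  simp_rw [transporter, card_filter]
  rw [sum_comm]
  simp [hunique, Fintype.card_perm]

lemma sum_card_transporter_sq (x : Fin m → Fin n) :
    ∑ y, #(transporter x y) ^ 2 = #(transporter x x) * m.factorial := by
  rw [← sum_card_transporter x, mul_sum]
  refine sum_congr rfl fun y _ => ?_
  obtain h | ⟨τ, hτ⟩ := (transporter x y).eq_empty_or_nonempty
  · simp [h]
  · rw [sq, card_transporter_of_mem hτ]

end Transporter

section Coboundary

variable (q r : Fin n → Fin n → ℂ)

def qHalf (a b : Fin n) : ℂ := if a < b then q a b else 1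

def wordWeight (x : Fin m → Fin n) : ℂ :=
  ∏ p ∈ {p : Fin m × Fin m | p.1 < p.2}, r (x p.1) (x p.2)

lemma qSigma_eq_prod_inversions (x : Fin m → Fin n) (σ : Perm (Fin m)) :
    qSigma q x σ = ∏ p ∈ {p : Fin m × Fin m | p.1 < p.2},
      if σ p.2 < σ p.1 then q (x p.1) (x p.2) else 1 := by
  rw [← prod_filter, filter_filter, qSigma]
  refine prod_nbij' (fun p => (σ⁻¹ p.2, σ⁻¹ p.1)) (fun p => (σ p.2, σ p.1)) ?_ ?_ ?_ ?_ ?_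
  all_goals intro p hp
  all_goals simp_all

lemma wordWeight_comp_perm_inv (x : Fin m → Fin n) (σ : Perm (Fin m)) :
    wordWeight r (x ∘ ⇑σ⁻¹) = ∏ p ∈ {p : Fin m × Fin m | p.1 < p.2},
      if σ p.2 < σ p.1 then r (x p.2) (x p.1) else r (x p.1) (x p.2) := by
  -- a pair `i < j` of positions of `x ∘ σ⁻¹` is the pair `σ⁻¹ i, σ⁻¹ j` of positions of `x`, sorted
  refine prod_nbij' (fun p => (min (σ⁻¹ p.1) (σ⁻¹ p.2), max (σ⁻¹ p.1) (σ⁻¹ p.2)))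
    (fun p => (min (σ p.1) (σ p.2), max (σ p.1) (σ p.2))) ?_ ?_ ?_ ?_ ?_
  all_goals intro p hp
  all_goals simp only [mem_filter, mem_univ, true_and] at hp ⊢
  · exact min_lt_max.2 (σ⁻¹.injective.ne hp.ne)
  · exact min_lt_max.2 (σ.injective.ne hp.ne)
  · obtain h | h := lt_or_gt_of_ne (σ⁻¹.injective.ne hp.ne)
    · rw [min_eq_left h.le, max_eq_right h.le]; simp [hp.le]
    · rw [min_eq_right h.le, max_eq_left h.le]; simp [hp.le]
  · obtain h | h := lt_or_gt_of_ne (σ.injective.ne hp.ne)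
    · rw [min_eq_left h.le, max_eq_right h.le]; simp [hp.le]
    · rw [min_eq_right h.le, max_eq_left h.le]; simp [hp.le]
  · obtain h | h := lt_or_gt_of_ne (σ⁻¹.injective.ne hp.ne)
    · rw [min_eq_left h.le, max_eq_right h.le]; simp [hp.not_gt]
    · rw [min_eq_right h.le, max_eq_left h.le]; simp [hp]

lemma qSigma_mul_wordWeight_comp_perm_inv (hr : ∀ a b, q a b * r b a = r a b)
    (x : Fin m → Fin n) (σ : Perm (Fin m)) :
    qSigma q x σ * wordWeight r (x ∘ ⇑σ⁻¹) = wordWeight r x := by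
  rw [qSigma_eq_prod_inversions, wordWeight_comp_perm_inv, ← prod_mul_distrib]
  refine prod_congr rfl fun p _ => ?_
  split_ifs <;> simp [hr]

lemma norm_wordWeight (hr : ∀ a b, ‖r a b‖ = 1) (x : Fin m → Fin n) :
    ‖wordWeight r x‖ = 1 := by
  simp [wordWeight, hr]

lemma wordWeight_ne_zero (hr : ∀ a b, ‖r a b‖ = 1) (x : Fin m → Fin n) : wordWeight r x ≠ 0 :=
  norm_ne_zero_iff.1 (by simp [norm_wordWeight r hr])

variable {q}

lemma mul_qHalf_swap (hq1 : ∀ i, q i i = 1) (hq2 : ∀ i j, q j i = (q i j)⁻¹)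
    (hq3 : ∀ i j, ‖q i j‖ = 1) (a b : Fin n) : q a b * qHalf q b a = qHalf q a b := by
  obtain h | rfl | h := lt_trichotomy a b
  · simp [qHalf, h, h.not_gt]
  · simp [qHalf, hq1]
  · have hq0 : q a b ≠ 0 := norm_ne_zero_iff.1 (by simp [hq3])
    simp [qHalf, h, h.not_gt, hq2 a b, hq0]

lemma norm_qHalf (hq3 : ∀ i j, ‖q i j‖ = 1) (a b : Fin n) : ‖qHalf q a b‖ = 1 := by
  unfold qHalf; split_ifs <;> simp [hq3]

end Coboundary

section Symmetrizer

variable (q r : Fin n → Fin n → ℂ)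

lemma Pm_apply (f : EuclideanSpace ℂ (Fin m → Fin n)) (y : Fin m → Fin n) :
    Pm q m f y = (m.factorial : ℂ)⁻¹ * ∑ σ : Perm (Fin m), qSigma q (y ∘ σ) σ * f (y ∘ σ) := by
  simp [Pm, Uop, Function.comp_def, WithLp.ofLp_sum]

lemma Pm_single_apply (hr : ∀ a b, q a b * r b a = r a b) (hr1 : ∀ a b, ‖r a b‖ = 1)
    (x y : Fin m → Fin n) :
    Pm q m (EuclideanSpace.single x 1) y
      = (m.factorial : ℂ)⁻¹ * (#(transporter x y) * (wordWeight r x / wordWeight r y)) := by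
  have hterm (σ : Perm (Fin m)) :
      qSigma q (y ∘ σ) σ * EuclideanSpace.single x (1 : ℂ) (y ∘ σ)
        = if y ∘ σ = x then wordWeight r x / wordWeight r y else 0 := by
    rw [PiLp.single_apply]
    split_ifs with h
    · have hy : x ∘ ⇑σ⁻¹ = y := by rw [← h]; ext; simp
      rw [mul_one, eq_div_iff (wordWeight_ne_zero r hr1 y), h, ← hy,
        qSigma_mul_wordWeight_comp_perm_inv q r hr]
    · rw [mul_zero]
  rw [Pm_apply, Fintype.sum_congr _ _ hterm, sum_ite, sum_const_zero, add_zero, sum_const,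
    nsmul_eq_mul, transporter]

lemma norm_Pm_single_apply (hr : ∀ a b, q a b * r b a = r a b) (hr1 : ∀ a b, ‖r a b‖ = 1)
    (x y : Fin m → Fin n) :
    ‖Pm q m (EuclideanSpace.single x 1) y‖ = #(transporter x y) / m.factorial := by
  simp [Pm_single_apply q r hr hr1, norm_wordWeight r hr1, div_eq_inv_mul]

end Symmetrizer

end QSymmetrization

open QSymmetrization

theorem stmt9_general {n : ℕ} (q : Fin n → Fin n → ℂ)
    (hq1 : ∀ i, q i i = 1) (hq2 : ∀ i j, q j i = (q i j)⁻¹) (hq3 : ∀ i j, ‖q i j‖ = 1)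
    (m : ℕ) (x : Fin m → Fin n) :
    (inner ℂ (Pm q m (EuclideanSpace.single x 1)) (EuclideanSpace.single x (1 : ℂ)) : ℂ)
        = (∏ i : Fin n, ((Finset.univ.filter fun p : Fin m => x p = i).card.factorial : ℂ))
            / (m.factorial : ℂ) ∧
    ‖Pm q m (EuclideanSpace.single x 1)‖ ^ 2
        = (∏ i : Fin n, ((Finset.univ.filter fun p : Fin m => x p = i).card.factorial : ℝ))
            / (m.factorial : ℝ) := by
  have hr := mul_qHalf_swap hq1 hq2 hq3
  have hr1 := norm_qHalf hq3
  constructor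
  · rw [EuclideanSpace.inner_single_right, Pm_single_apply q _ hr hr1,
      div_self (wordWeight_ne_zero _ hr1 x), card_transporter_self]
    push_cast
    simp [div_eq_inv_mul, mul_comm]
  · have hsq : ∑ y, (#(transporter x y) : ℝ) ^ 2 = #(transporter x x) * m.factorial := by
      exact_mod_cast sum_card_transporter_sq x
    rw [PiLp.norm_sq_eq_of_L2]
    simp_rw [norm_Pm_single_apply q _ hr hr1, div_pow, ← sum_div, hsq, card_transporter_self]
    push_cast
    field_simp

/-- If the letter `i` occurs exactly `k_i` times in the word `x` of length `m`, then
`⟨P_m e_x, e_x⟩ = (k_1! ⋯ k_n!)/m!`; equivalently `‖P_m e_x‖² = (k_1! ⋯ k_n!)/m!`. -/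
theorem stmt9 {n : ℕ} (hn : 2 ≤ n) (q : Fin n → Fin n → ℂ)
    (hq1 : ∀ i, q i i = 1) (hq2 : ∀ i j, q j i = (q i j)⁻¹) (hq3 : ∀ i j, ‖q i j‖ = 1)
    (m : ℕ) (x : Fin m → Fin n) :
    (inner ℂ (Pm q m (EuclideanSpace.single x 1)) (EuclideanSpace.single x (1 : ℂ)) : ℂ)
        = (∏ i : Fin n, ((Finset.univ.filter fun p : Fin m => x p = i).card.factorial : ℂ))
            / (m.factorial : ℂ) ∧
    ‖Pm q m (EuclideanSpace.single x 1)‖ ^ 2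
        = (∏ i : Fin n, ((Finset.univ.filter fun p : Fin m => x p = i).card.factorial : ℝ))
            / (m.factorial : ℝ) :=
  stmt9_general q hq1 hq2 hq3 m x
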